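/- arXiv:2405.09203 — 3 statements merged into one kernel-verified Lean document; each statement's English description precedes it below -/
import Mathlib

section
/- Let μ be a finite measure on a measurable space M, and let s₁,…,s_N be functions M → ℂ that are orthonormal in L²(μ). Then ∫_{M^N} |det(s_i(x_j))_{1≤i,j≤N}|² dμ^{⊗N}(x₁,…,x_N) = N!. -/
open MeasureTheory Equiv

/-- Cauchy–Binet / Andréief identity: if `s₁,…,s_N` are orthonormal in `L²(μ)` for a
finite measure `μ`, then `∫_{M^N} |det(s_i(x_j))|² dμ^{⊗N} = N!`. -/
theorem andreief_partition_function
    {M : Type*} [MeasurableSpace M] (μ : Measure M) [IsFiniteMeasure μ]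
    (N : ℕ) (s : Fin N → M → ℂ) (hmeas : ∀ i, Measurable (s i))
    (horth : ∀ i j, ∫ x, s i x * (starRingEnd ℂ) (s j x) ∂μ =
      if i = j then 1 else 0) :
    ∫ x : Fin N → M,
        ‖(Matrix.of fun i j => s i (x j)).det‖ ^ 2 ∂(Measure.pi fun _ => μ) =
      (N.factorial : ℝ) := by
  letI : MeasureSpace M := ⟨μ⟩
  have hasm : ∀ i, AEStronglyMeasurable (s i) μ := fun i => (hmeas i).aestronglyMeasurable
  -- each `s i` is in L²
  have hL2 : ∀ i, MemLp (s i) 2 μ := by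
    intro i
    have h1 : Integrable (fun x => s i x * (starRingEnd ℂ) (s i x)) μ := by
      by_contra h
      have := horth i i
      rw [integral_undef h] at this
      simp at this
    rw [memLp_two_iff_integrable_sq_norm (hasm i)]
    refine h1.re.congr ?_
    filter_upwards with x
    simp [Complex.mul_conj, Complex.normSq_eq_norm_sq, ← Complex.ofReal_pow]
  -- pairwise products are integrable
  have hInt : ∀ i j, Integrable (fun x => s i x * (starRingEnd ℂ) (s j x)) μ := by
    intro i j
    have hconj : MemLp (fun x => (starRingEnd ℂ) (s j x)) 2 μ := by
      refine MemLp.of_le (hL2 j) ?_ ?_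
      · exact ((Complex.continuous_conj.measurable).comp (hmeas j)).aestronglyMeasurable
      · filter_upwards with x; simp
    have h2 := ((hL2 i).smul hconj (r := 1))
    rw [memLp_one_iff_integrable] at h2
    exact h2.congr (by filter_upwards with x; simp [smul_eq_mul, mul_comm])
  set ν : Measure (Fin N → M) := Measure.pi fun _ => μ with hν
  set c : Perm (Fin N) → Perm (Fin N) → ℂ :=
    fun σ τ => (((Perm.sign σ : ℤ) * (Perm.sign τ : ℤ) : ℤ) : ℂ) with hc
  set g : Perm (Fin N) → Perm (Fin N) → (Fin N → M) → ℂ :=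
    fun σ τ x => ∏ j, (s (σ j) (x j) * (starRingEnd ℂ) (s (τ j) (x j))) with hg
  have hgInt : ∀ σ τ, Integrable (g σ τ) ν := by
    intro σ τ
    exact Integrable.fintype_prod (f := fun j y => s (σ j) y * (starRingEnd ℂ) (s (τ j) y))
      (fun j => hInt (σ j) (τ j))
  have hgint : ∀ σ τ, ∫ x, g σ τ x ∂ν = if σ = τ then 1 else 0 := by
    intro σ τ
    have h3 : ∫ x, g σ τ x ∂ν =
        ∏ j, ∫ y, s (σ j) y * (starRingEnd ℂ) (s (τ j) y) ∂μ :=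
      integral_fintype_prod_eq_prod (ι := Fin N)
        (f := fun j y => s (σ j) y * (starRingEnd ℂ) (s (τ j) y))
    rw [h3]
    simp_rw [horth]
    by_cases h : σ = τ
    · subst h; simp
    · rw [if_neg h]
      obtain ⟨j, hj⟩ : ∃ j, σ j ≠ τ j := by
        by_contra hcon; push_neg at hcon; exact h (Equiv.ext hcon)
      exact Finset.prod_eq_zero (Finset.mem_univ j) (by simp [hj])
  set F : (Fin N → M) → ℂ := fun x => ∑ σ : Perm (Fin N), ∑ τ : Perm (Fin N), c σ τ * g σ τ x
    with hF
  have hdet : ∀ x : Fin N → M,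
      ‖(Matrix.of fun i j => s i (x j)).det‖ ^ 2 = (F x).re := by
    intro x
    have h4 : ((Matrix.of fun i j => s i (x j)).det) *
        (starRingEnd ℂ) ((Matrix.of fun i j => s i (x j)).det) = F x := by
      rw [hF, Matrix.det_apply, map_sum, Finset.sum_mul_sum]
      refine Finset.sum_congr rfl fun σ _ => Finset.sum_congr rfl fun τ _ => ?_
      simp only [Matrix.of_apply, Units.smul_def, zsmul_eq_mul, map_mul, map_prod,
        map_intCast, hc, hg, Finset.prod_mul_distrib, Int.cast_mul]
      ring
    have h5 := congrArg Complex.re h4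
    rw [Complex.mul_conj, Complex.ofReal_re] at h5
    rw [← h5, Complex.normSq_eq_norm_sq]
  have hFint : Integrable F ν :=
    integrable_finset_sum _ fun σ _ => integrable_finset_sum _ fun τ _ =>
      ((hgInt σ τ).const_mul _)
  have step1 : ∫ x : Fin N → M, ‖(Matrix.of fun i j => s i (x j)).det‖ ^ 2 ∂ν =
      ∫ x, (F x).re ∂ν := integral_congr_ae (Filter.Eventually.of_forall hdet)
  have step2 : ∫ x, F x ∂ν = (N.factorial : ℂ) := by
    rw [hF, integral_finset_sum _ fun σ _ => integrable_finset_sum _ fun τ _ =>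
      ((hgInt σ τ).const_mul _)]
    have h6 : ∀ σ : Perm (Fin N), ∫ x, ∑ τ, c σ τ * g σ τ x ∂ν = 1 := by
      intro σ
      rw [integral_finset_sum _ fun τ _ => ((hgInt σ τ).const_mul _)]
      have h7 : ∀ τ : Perm (Fin N), ∫ x, c σ τ * g σ τ x ∂ν = c σ τ * (if σ = τ then 1 else 0) := by
        intro τ
        rw [integral_const_mul, hgint]
      simp_rw [h7]
      simp [mul_ite, mul_one, mul_zero, Finset.sum_ite_eq, hc]
      norm_cast
      rw [← sq, Int.units_sq, Units.val_one]
    simp_rw [h6]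
    simp [Fintype.card_perm]
  rw [step1]
  simp only [← RCLike.re_to_complex]
  rw [integral_re hFint, step2]
  simp
end

section
/- Let (F_k) be a sequence of entire functions on ℂ that is uniformly bounded on every compact subset of ℂ, such that F_k(t) converges for every real t to G(t) = -t²σ²/2. Then F_k converges uniformly on every compact subset of ℂ to the entire function z ↦ -z²σ²/2; in particular F_k(iξ) → ξ²σ²/2 for every real ξ. -/
open Filter Complex

open Finset Function Metric fwdDiff
open scoped NNReal

lemma fwdDiff_pow (h : ℂ) (m : ℕ) :
    Δ_[h] (fun x : ℂ => x ^ m) =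
      fun x => ∑ i ∈ range m, ((m.choose i : ℂ) * h ^ (m - i)) * x ^ i := by
  ext x
  simp only [fwdDiff]
  rw [add_pow x h m, Finset.sum_range_succ]
  simp only [Nat.choose_self, Nat.cast_one, Nat.sub_self, pow_zero, mul_one, one_mul,
    add_sub_cancel_right]
  exact Finset.sum_congr rfl fun i _ => by ring

lemma fwdDiff_iter_pow_zero (h : ℂ) :
    ∀ n, (∀ m < n, (Δ_[h])^[n] (fun x : ℂ => x ^ m) 0 = 0) ∧
      (Δ_[h])^[n] (fun x : ℂ => x ^ n) 0 = (n.factorial : ℂ) * h ^ n := by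
  intro n
  induction n with
  | zero => simp
  | succ n ih =>
    have key : ∀ m : ℕ, (Δ_[h])^[n+1] (fun x : ℂ => x ^ m) 0
        = ∑ i ∈ range m, ((m.choose i : ℂ) * h ^ (m - i)) * (Δ_[h])^[n] (fun x : ℂ => x ^ i) 0 := by
      intro m
      rw [Function.iterate_succ_apply, fwdDiff_pow]
      have : (fun x : ℂ => ∑ i ∈ range m, ((m.choose i : ℂ) * h ^ (m - i)) * x ^ i)
          = ∑ i ∈ range m, ((m.choose i : ℂ) * h ^ (m - i)) • (fun x : ℂ => x ^ i) := by
        ext x; simp [Finset.sum_apply]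
      rw [this, fwdDiff_iter_finset_sum]
      simp [Finset.sum_apply]
    constructor
    · intro m hm
      rw [key]
      apply Finset.sum_eq_zero
      intro i hi
      rw [ih.1 i (lt_of_lt_of_le (Finset.mem_range.mp hi) (Nat.lt_succ_iff.mp hm)), mul_zero]
    · rw [key, Finset.sum_range_succ_comm]
      rw [Finset.sum_eq_zero (fun i hi => by rw [ih.1 i (Finset.mem_range.mp hi), mul_zero]),
        add_zero, ih.2]
      rw [Nat.choose_succ_self_right]
      push_cast [Nat.factorial_succ]
      simp only [show 1 + n - n = 1 by omega, show n + 1 - n = 1 by omega, pow_one]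
      ring

noncomputable def coef (f : ℂ → ℂ) (ρ : ℝ≥0) (n : ℕ) : ℂ :=
  cauchyPowerSeries f 0 ρ n (fun _ => 1)

lemma coef_hasSum {f : ℂ → ℂ} (hf : Differentiable ℂ f) {ρ : ℝ≥0} (hρ : 0 < ρ) (z : ℂ) :
    HasSum (fun n => coef f ρ n * z ^ n) (f z) := by
  have H := (hf.hasFPowerSeriesOnBall 0 hρ).hasSum (y := z)
    (by simp [EMetric.mem_ball, edist_lt_top])
  simp only [zero_add] at H
  convert H using 2 with n
  · rfl
  have := (cauchyPowerSeries f 0 ρ n).map_smul_univ (fun _ : Fin n => z) (fun _ => 1)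
  simp only [smul_eq_mul, mul_one, Finset.prod_const, Finset.card_univ, Fintype.card_fin] at this
  rw [this, coef, mul_comm]

lemma coef_norm_le {f : ℂ → ℂ} (hf : Differentiable ℂ f) {ρ : ℝ≥0} (hρ : 0 < (ρ:ℝ)) {M : ℝ}
    (hM : ∀ z ∈ closedBall (0:ℂ) ρ, ‖f z‖ ≤ M) (n : ℕ) :
    ‖coef f ρ n‖ ≤ M / (ρ:ℝ) ^ n := by
  have h1 : ‖coef f ρ n‖ ≤ ‖cauchyPowerSeries f 0 ρ n‖ := by
    refine le_trans (ContinuousMultilinearMap.le_opNorm _ _) ?_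
    simp
  refine h1.trans ?_
  refine (norm_cauchyPowerSeries_le f 0 ρ n).trans ?_
  have hint : (∫ θ : ℝ in (0:ℝ)..2 * Real.pi, ‖f (circleMap 0 ρ θ)‖) ≤ 2 * Real.pi * M := by
    have : ∀ θ ∈ Set.Icc (0:ℝ) (2 * Real.pi), ‖f (circleMap 0 ρ θ)‖ ≤ M := by
      intro θ _
      apply hM
      simp only [mem_closedBall, Complex.dist_eq, sub_zero]
      rw [show ‖circleMap 0 ρ θ‖ = |(ρ:ℝ)| from norm_circleMap_zero ρ θ]
      rw [_root_.abs_of_nonneg hρ.le]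
    calc (∫ θ : ℝ in (0:ℝ)..2 * Real.pi, ‖f (circleMap 0 ρ θ)‖)
        ≤ ∫ _ : ℝ in (0:ℝ)..2 * Real.pi, M := by
          apply intervalIntegral.integral_mono_on Real.two_pi_pos.le
          · exact ((hf.continuous.norm.comp (continuous_circleMap 0 ρ)).intervalIntegrable _ _)
          · exact intervalIntegrable_const
          · exact this
      _ = 2 * Real.pi * M := by simp [mul_comm]
  calc ((2 * Real.pi)⁻¹ * ∫ θ : ℝ in (0:ℝ)..2 * Real.pi, ‖f (circleMap 0 ρ θ)‖) * |(ρ:ℝ)|⁻¹ ^ n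
      ≤ ((2 * Real.pi)⁻¹ * (2 * Real.pi * M)) * |(ρ:ℝ)|⁻¹ ^ n := by
        apply mul_le_mul_of_nonneg_right
        · exact mul_le_mul_of_nonneg_left hint (by positivity)
        · positivity
    _ = M / (ρ:ℝ) ^ n := by
        rw [inv_mul_cancel_left₀ Real.two_pi_pos.ne', _root_.abs_of_nonneg hρ.le]
        rw [div_eq_mul_inv, inv_pow]

-- norm bound on iterated forward differences of monomials
lemma fwdDiff_iter_pow_norm_le {h : ℝ} (hh : 0 ≤ h) (n m : ℕ) :
    ‖(Δ_[(h:ℂ)])^[n] (fun x : ℂ => x ^ m) 0‖ ≤ 2 ^ n * ((n:ℝ) * h) ^ m := by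
  rw [fwdDiff_iter_eq_sum_shift]
  refine (norm_sum_le _ _).trans ?_
  have step : ∀ k ∈ range (n+1),
      ‖((-1:ℤ) ^ (n - k) * n.choose k) • ((0:ℂ) + k • (h:ℂ)) ^ m‖
        ≤ (n.choose k : ℝ) * ((n:ℝ) * h) ^ m := by
    intro k hk
    have hk' : k ≤ n := Nat.lt_succ_iff.mp (mem_range.mp hk)
    rw [zsmul_eq_mul]
    rw [norm_mul]
    have h1 : ‖(((-1:ℤ) ^ (n - k) * n.choose k : ℤ) : ℂ)‖ = (n.choose k : ℝ) := by
      rw [Complex.norm_intCast]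
      push_cast
      rw [_root_.abs_mul, _root_.abs_pow, _root_.abs_neg, _root_.abs_one, one_pow, one_mul, Nat.abs_cast]
    rw [h1]
    apply mul_le_mul_of_nonneg_left _ (Nat.cast_nonneg _)
    have : ((0:ℂ) + k • (h:ℂ)) = (((k:ℝ) * h : ℝ) : ℂ) := by push_cast; ring
    rw [this, norm_pow, Complex.norm_real, Real.norm_eq_abs,
      _root_.abs_of_nonneg (by positivity)]
    apply pow_le_pow_left₀ (by positivity)
    exact mul_le_mul_of_nonneg_right (Nat.cast_le.mpr hk') hh
  refine (Finset.sum_le_sum step).trans ?_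
  rw [← Finset.sum_mul, ← Nat.cast_sum, Nat.sum_range_choose]
  push_cast
  norm_num

theorem fd_coef_estimate {f : ℂ → ℂ} (hf : Differentiable ℂ f) {ρ : ℝ≥0} (hρ : 0 < (ρ:ℝ))
    {M : ℝ} (hM : ∀ z ∈ closedBall (0:ℂ) ρ, ‖f z‖ ≤ M) (n : ℕ) {h : ℝ} (hh : 0 < h)
    (hsmall : 2 * (n:ℝ) * h / ρ ≤ 1) :
    ‖(Δ_[(h:ℂ)])^[n] f 0 - (n.factorial : ℂ) * (h:ℂ) ^ n * coef f ρ n‖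
      ≤ M * 2 ^ (n+1) * (2 * (n:ℝ) * h / ρ) ^ (n+1) := by
  have hρ0 : (0:ℝ) < ρ := hρ
  have hM0 : 0 ≤ M := le_trans (norm_nonneg _) (hM 0 (by simp [hρ0.le]))
  set q : ℕ → ℂ := fun m => (Δ_[(h:ℂ)])^[n] (fun x : ℂ => x ^ m) 0 with hq
  -- HasSum over coefficients
  have hsum : HasSum (fun m => coef f ρ m * q m) ((Δ_[(h:ℂ)])^[n] f 0) := by
    have hmain : ∀ k ∈ range (n+1),
        HasSum (fun m => (((-1:ℤ) ^ (n - k) * n.choose k) • (coef f ρ m * ((0:ℂ) + k • (h:ℂ)) ^ m)))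
          (((-1:ℤ) ^ (n - k) * n.choose k) • f ((0:ℂ) + k • (h:ℂ))) := by
      intro k _
      exact (coef_hasSum hf (by exact_mod_cast hρ) _).const_smul _
    have H := hasSum_sum hmain
    rw [← fwdDiff_iter_eq_sum_shift (h:ℂ) f n 0] at H
    convert H using 2 with m
    show coef f ρ m * (Δ_[(h:ℂ)])^[n] (fun x : ℂ => x ^ m) 0 = _
    rw [fwdDiff_iter_eq_sum_shift (h:ℂ) (fun x : ℂ => x ^ m) n 0, Finset.mul_sum]
    exact Finset.sum_congr rfl fun k _ => mul_smul_comm _ _ _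
  -- remove the n-th term
  have hn_term : coef f ρ n * q n = (n.factorial : ℂ) * (h:ℂ) ^ n * coef f ρ n := by
    rw [hq]; simp only []
    rw [(fwdDiff_iter_pow_zero (h:ℂ) n).2]; ring
  have hupd := hsum.update n 0
  rw [zero_sub, neg_add_eq_sub] at hupd
  -- bound function
  set K : ℝ := M * 2 ^ n * (2 * (n:ℝ) * h / ρ) ^ (n+1) with hK
  have hK0 : 0 ≤ K := by positivity
  have hbound : ∀ m, ‖Function.update (fun m => coef f ρ m * q m) n 0 m‖ ≤ K * (1/2) ^ m := by
    intro m
    rcases eq_or_ne m n with rfl | hmn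
    · rw [Function.update_self]; simp; positivity
    rw [Function.update_of_ne hmn]
    rcases lt_or_gt_of_ne hmn with hlt | hgt
    · rw [hq]; simp only []
      rw [(fwdDiff_iter_pow_zero (h:ℂ) n).1 m hlt, mul_zero]
      simp; positivity
    · -- m > n
      rw [norm_mul]
      have h1 : ‖coef f ρ m‖ ≤ M / (ρ:ℝ) ^ m := coef_norm_le hf hρ hM m
      have h2 : ‖q m‖ ≤ 2 ^ n * ((n:ℝ) * h) ^ m := fwdDiff_iter_pow_norm_le hh.le n m
      calc ‖coef f ρ m‖ * ‖q m‖ ≤ (M / (ρ:ℝ) ^ m) * (2 ^ n * ((n:ℝ) * h) ^ m) := by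
            apply mul_le_mul h1 h2 (norm_nonneg _) (by positivity)
        _ = M * 2 ^ n * ((n:ℝ) * h / ρ) ^ m := by
            rw [div_pow, mul_pow]; ring
        _ = M * 2 ^ n * (2 * (n:ℝ) * h / ρ) ^ m * (1/2) ^ m := by
            rw [mul_assoc (M * 2 ^ n), ← mul_pow]
            congr 2
            ring
        _ ≤ K * (1/2) ^ m := by
            apply mul_le_mul_of_nonneg_right _ (by positivity)
            rw [hK]
            apply mul_le_mul_of_nonneg_left _ (by positivity)
            apply pow_le_pow_of_le_one (by positivity) hsmall
            omega
  have hgeom : Summable (fun m : ℕ => K * (1/2) ^ m) :=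
    (summable_geometric_of_lt_one (by norm_num) (by norm_num)).mul_left K
  have hsummable : Summable (fun m => ‖Function.update (fun m => coef f ρ m * q m) n 0 m‖) :=
    Summable.of_nonneg_of_le (fun _ => norm_nonneg _) hbound hgeom
  have := hupd.tsum_eq
  calc ‖(Δ_[(h:ℂ)])^[n] f 0 - (n.factorial : ℂ) * (h:ℂ) ^ n * coef f ρ n‖
      = ‖∑' m, Function.update (fun m => coef f ρ m * q m) n 0 m‖ := by
        rw [this, hn_term]
    _ ≤ ∑' m, ‖Function.update (fun m => coef f ρ m * q m) n 0 m‖ :=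
        norm_tsum_le_tsum_norm hsummable
    _ ≤ ∑' m : ℕ, K * (1/2) ^ m := hsummable.tsum_le_tsum hbound hgeom
    _ = K * 2 := by
        rw [tsum_mul_left, tsum_geometric_of_lt_one (by norm_num) (by norm_num)]
        norm_num
    _ ≤ M * 2 ^ (n+1) * (2 * (n:ℝ) * h / ρ) ^ (n+1) := by
        rw [hK, pow_succ]
        ring_nf
        exact le_refl _

lemma Gdiff (σ : ℝ) : Differentiable ℂ (fun z : ℂ => -(z^2)*(σ:ℂ)^2/2) := by
  apply Differentiable.div_const
  exact (differentiable_pow 2).neg.mul_const _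

lemma coef_tendsto {σ : ℝ} {F : ℕ → ℂ → ℂ} (hent : ∀ k, Differentiable ℂ (F k))
    {ρ : ℝ≥0} (hρ : 0 < (ρ:ℝ)) {M : ℝ}
    (hMF : ∀ k, ∀ z ∈ closedBall (0:ℂ) ρ, ‖F k z‖ ≤ M)
    {MG : ℝ} (hMG : ∀ z ∈ closedBall (0:ℂ) ρ, ‖-(z^2)*(σ:ℂ)^2/2‖ ≤ MG)
    (hreal : ∀ t : ℝ, Tendsto (fun k => F k (t:ℂ)) atTop
      (nhds (-((t:ℂ)^2)*(σ:ℂ)^2/2)))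
    (n : ℕ) :
    Tendsto (fun k => coef (F k) ρ n) atTop
      (nhds (coef (fun z => -(z^2)*(σ:ℂ)^2/2) ρ n)) := by
  set G : ℂ → ℂ := fun z => -(z^2)*(σ:ℂ)^2/2 with hG
  have hM0 : 0 ≤ M := le_trans (norm_nonneg _) (hMF 0 0 (by simp [hρ.le]))
  have hMG0 : 0 ≤ MG := le_trans (norm_nonneg _) (hMG 0 (by simp [hρ.le]))
  rw [Metric.tendsto_atTop]
  intro ε hε
  -- choose h
  set C : ℝ := (M + MG) * 2 ^ (n+1) * (2 * (n:ℝ) / ρ) ^ (n+1) / n.factorial with hC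
  have hC0 : 0 ≤ C := by positivity
  set h : ℝ := min ((ρ:ℝ) / (2*(n:ℝ)+2)) ((ε/2) / (C+1)) with hh_def
  have hh : 0 < h := lt_min (by positivity) (by positivity)
  have hsmall : 2 * (n:ℝ) * h / ρ ≤ 1 := by
    rw [div_le_one hρ]
    calc 2 * (n:ℝ) * h ≤ 2 * (n:ℝ) * ((ρ:ℝ) / (2*(n:ℝ)+2)) := by
          apply mul_le_mul_of_nonneg_left (min_le_left _ _) (by positivity)
      _ ≤ ρ := by
          rw [← mul_div_assoc, div_le_iff₀ (by positivity : (0:ℝ) < 2*(n:ℝ)+2)]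
          nlinarith [hρ]
  have hCh : C * h < ε / 2 := by
    calc C * h ≤ C * ((ε/2) / (C+1)) :=
          mul_le_mul_of_nonneg_left (min_le_right _ _) hC0
      _ < ε / 2 := by
          rw [mul_div_assoc']
          rw [div_lt_iff₀ (by positivity)]
          nlinarith
  set A : ℝ := (n.factorial : ℝ) * h ^ n with hA
  have hA0 : 0 < A := by positivity
  -- convergence of forward differences
  have hfd : Tendsto (fun k => (Δ_[(h:ℂ)])^[n] (F k) 0) atTop
      (nhds ((Δ_[(h:ℂ)])^[n] G 0)) := by
    have hpt : ∀ j : ℕ, ((0:ℂ) + j • (h:ℂ)) = (((j:ℝ) * h : ℝ) : ℂ) := by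
      intro j; push_cast; ring
    have : ∀ k, (Δ_[(h:ℂ)])^[n] (F k) 0
        = ∑ j ∈ range (n+1), ((-1:ℤ) ^ (n - j) * n.choose j) • F k (((j:ℝ) * h : ℝ) : ℂ) := by
      intro k
      rw [fwdDiff_iter_eq_sum_shift]
      exact Finset.sum_congr rfl fun j _ => by rw [hpt j]
    simp_rw [this]
    rw [fwdDiff_iter_eq_sum_shift]
    have : ∑ j ∈ range (n+1), ((-1:ℤ) ^ (n - j) * n.choose j) • G (0 + j • (h:ℂ))
        = ∑ j ∈ range (n+1), ((-1:ℤ) ^ (n - j) * n.choose j) • G (((j:ℝ) * h : ℝ) : ℂ) :=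
      Finset.sum_congr rfl fun j _ => by rw [hpt j]
    rw [this]
    apply tendsto_finset_sum
    intro j _
    exact (hreal ((j:ℝ) * h)).const_smul _
  -- eventually close
  have hev : ∀ᶠ k in atTop,
      ‖(Δ_[(h:ℂ)])^[n] (F k) 0 - (Δ_[(h:ℂ)])^[n] G 0‖ < (ε/2) * A := by
    have := (tendsto_iff_norm_sub_tendsto_zero.mp hfd)
    exact (this.eventually_lt_const (by positivity))
  rw [eventually_atTop] at hev
  obtain ⟨N, hN⟩ := hev
  refine ⟨N, fun k hk => ?_⟩
  rw [dist_eq_norm]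
  -- main estimate
  have hEF := fd_coef_estimate (hent k) hρ (hMF k) n hh hsmall
  have hEG := fd_coef_estimate (Gdiff σ) hρ hMG n hh hsmall
  have key : ‖(n.factorial : ℂ) * (h:ℂ) ^ n * (coef (F k) ρ n - coef G ρ n)‖
      ≤ ‖(Δ_[(h:ℂ)])^[n] (F k) 0 - (Δ_[(h:ℂ)])^[n] G 0‖
        + M * 2 ^ (n+1) * (2 * (n:ℝ) * h / ρ) ^ (n+1)
        + MG * 2 ^ (n+1) * (2 * (n:ℝ) * h / ρ) ^ (n+1) := by
    have eqn : (n.factorial : ℂ) * (h:ℂ) ^ n * (coef (F k) ρ n - coef G ρ n)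
        = ((Δ_[(h:ℂ)])^[n] (F k) 0 - (Δ_[(h:ℂ)])^[n] G 0)
          - ((Δ_[(h:ℂ)])^[n] (F k) 0 - (n.factorial : ℂ) * (h:ℂ) ^ n * coef (F k) ρ n)
          + ((Δ_[(h:ℂ)])^[n] G 0 - (n.factorial : ℂ) * (h:ℂ) ^ n * coef G ρ n) := by
      ring
    rw [eqn]
    refine (norm_add_le _ _).trans ?_
    gcongr
    refine (norm_sub_le _ _).trans ?_
    gcongr
  have hnormA : ‖(n.factorial : ℂ) * (h:ℂ) ^ n‖ = A := by
    rw [norm_mul, norm_pow, Complex.norm_natCast, Complex.norm_real, Real.norm_eq_abs,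
      _root_.abs_of_nonneg hh.le]
  have expand : ‖coef (F k) ρ n - coef G ρ n‖
      = ‖(n.factorial : ℂ) * (h:ℂ) ^ n * (coef (F k) ρ n - coef G ρ n)‖ / A := by
    rw [norm_mul, hnormA]
    field_simp
  rw [expand]
  rw [div_lt_iff₀ hA0]
  calc ‖(n.factorial : ℂ) * (h:ℂ) ^ n * (coef (F k) ρ n - coef G ρ n)‖
      ≤ ‖(Δ_[(h:ℂ)])^[n] (F k) 0 - (Δ_[(h:ℂ)])^[n] G 0‖
        + M * 2 ^ (n+1) * (2 * (n:ℝ) * h / ρ) ^ (n+1)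
        + MG * 2 ^ (n+1) * (2 * (n:ℝ) * h / ρ) ^ (n+1) := key
    _ < (ε/2) * A + (M + MG) * 2 ^ (n+1) * (2 * (n:ℝ) * h / ρ) ^ (n+1) := by
        have := hN k hk
        ring_nf
        ring_nf at this
        linarith
    _ ≤ (ε/2) * A + (C * h) * A := by
        have : (M + MG) * 2 ^ (n+1) * (2 * (n:ℝ) * h / ρ) ^ (n+1) = (C * h) * A := by
          rw [hC, hA]
          field_simp
          ring
        rw [this]
    _ < ε * A := by nlinarith

lemma unif_on_ball {σ : ℝ} {F : ℕ → ℂ → ℂ} (hent : ∀ k, Differentiable ℂ (F k))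
    (hbd : ∀ K : Set ℂ, IsCompact K → ∃ C, ∀ k, ∀ z ∈ K, ‖F k z‖ ≤ C)
    (hreal : ∀ t : ℝ, Tendsto (fun k => F k (t : ℂ)) atTop
      (nhds (-((t : ℂ) ^ 2) * (σ : ℂ) ^ 2 / 2)))
    {R : ℝ} (hR : 0 < R) :
    TendstoUniformlyOn (fun k z => F k z) (fun z => -(z ^ 2) * (σ : ℂ) ^ 2 / 2)
      atTop (closedBall (0:ℂ) R) := by
  set G : ℂ → ℂ := fun z => -(z^2)*(σ:ℂ)^2/2 with hGdef
  set ρ : ℝ≥0 := (2*R).toNNReal with hρdef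
  have hρR : (ρ:ℝ) = 2*R := Real.coe_toNNReal _ (by positivity)
  have hρ : 0 < (ρ:ℝ) := by rw [hρR]; positivity
  obtain ⟨M, hM⟩ := hbd (closedBall (0:ℂ) ρ) (isCompact_closedBall _ _)
  have hM0 : 0 ≤ M := le_trans (norm_nonneg _) (hM 0 0 (by simp [hρ.le]))
  set MG : ℝ := (ρ:ℝ)^2 * σ^2 / 2 with hMGdef
  have hMG : ∀ z ∈ closedBall (0:ℂ) ρ, ‖-(z^2)*(σ:ℂ)^2/2‖ ≤ MG := by
    intro z hz
    rw [mem_closedBall, Complex.dist_eq, sub_zero] at hz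
    have : ‖-(z^2)*(σ:ℂ)^2/2‖ = ‖z‖^2 * σ^2 / 2 := by
      rw [norm_div, norm_mul, norm_neg, norm_pow, norm_pow, Complex.norm_real,
        Real.norm_eq_abs]
      rw [_root_.sq_abs]
      norm_num
    rw [this, hMGdef]
    gcongr
  have hMG0 : 0 ≤ MG := by rw [hMGdef]; positivity
  have hcoef : ∀ n, Tendsto (fun k => coef (F k) ρ n) atTop (nhds (coef G ρ n)) :=
    fun n => coef_tendsto hent hρ hM hMG hreal n
  -- uniform coefficient bounds
  have hcF : ∀ k n, ‖coef (F k) ρ n‖ ≤ M / (ρ:ℝ)^n :=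
    fun k n => coef_norm_le (hent k) hρ (hM k) n
  have hcG : ∀ n, ‖coef G ρ n‖ ≤ MG / (ρ:ℝ)^n :=
    fun n => coef_norm_le (Gdiff σ) hρ hMG n
  have hRρ : R / (ρ:ℝ) = 1/2 := by rw [hρR]; field_simp
  -- key pointwise bound on coefficient differences
  have hdiff_bd : ∀ k n, ‖coef (F k) ρ n - coef G ρ n‖ * R^n ≤ (M + MG) * (1/2:ℝ)^n := by
    intro k n
    calc ‖coef (F k) ρ n - coef G ρ n‖ * R^n
        ≤ (M / (ρ:ℝ)^n + MG / (ρ:ℝ)^n) * R^n := by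
          apply mul_le_mul_of_nonneg_right _ (by positivity)
          exact (norm_sub_le _ _).trans (add_le_add (hcF k n) (hcG n))
      _ = (M + MG) * (R / (ρ:ℝ))^n := by
          rw [div_pow]
          field_simp
          try ring
      _ = (M + MG) * (1/2:ℝ)^n := by rw [hRρ]
  rw [Metric.tendstoUniformlyOn_iff]
  intro ε hε
  -- choose N for the tail
  obtain ⟨N, hN⟩ : ∃ N : ℕ, (M + MG) * 2 * (1/2:ℝ)^N < ε/2 := by
    obtain ⟨N, hN⟩ := exists_pow_lt_of_lt_one
      (show (0:ℝ) < (ε/2) / ((M+MG)*2+1) by positivity) (by norm_num : (1/2:ℝ) < 1)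
    refine ⟨N, ?_⟩
    have h2 : ((M+MG)*2+1) * (1/2:ℝ)^N < ((M+MG)*2+1) * ((ε/2) / ((M+MG)*2+1)) :=
      mul_lt_mul_of_pos_left hN (by positivity)
    rw [mul_div_cancel₀ _ (by positivity : ((M+MG)*2+1) ≠ 0)] at h2
    nlinarith [pow_nonneg (by norm_num : (0:ℝ) ≤ 1/2) N]
  -- eventually all coefficients below N are close
  set S : ℝ := ∑ n ∈ range N, R^n with hS
  have hS0 : 0 ≤ S := Finset.sum_nonneg fun n _ => by positivity
  set δ : ℝ := (ε/2) / (S + 1) with hδ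
  have hδ0 : 0 < δ := by positivity
  have hev : ∀ᶠ k in atTop, ∀ n ∈ range N, ‖coef (F k) ρ n - coef G ρ n‖ < δ := by
    rw [eventually_all_finset]
    intro n _
    exact Filter.Tendsto.eventually_lt_const hδ0 (tendsto_iff_norm_sub_tendsto_zero.mp (hcoef n))
  rw [eventually_atTop] at hev
  obtain ⟨K0, hK0⟩ := hev
  rw [eventually_atTop]
  refine ⟨K0, fun k hk z hz => ?_⟩
  rw [mem_closedBall, Complex.dist_eq, sub_zero] at hz
  rw [dist_comm, dist_eq_norm]
  -- the series for the difference
  have hsumF := coef_hasSum (hent k) (by exact_mod_cast hρ) z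
  have hsumG := coef_hasSum (Gdiff σ) (by exact_mod_cast hρ) z
  have hsub : HasSum (fun n => (coef (F k) ρ n - coef G ρ n) * z^n) (F k z - G z) := by
    have := hsumF.sub hsumG
    convert this using 2 with n
    · rfl
    ring
  set u : ℕ → ℂ := fun n => (coef (F k) ρ n - coef G ρ n) * z^n with hu
  have hub : ∀ n, ‖u n‖ ≤ (M + MG) * (1/2:ℝ)^n := by
    intro n
    rw [hu]
    calc ‖(coef (F k) ρ n - coef G ρ n) * z^n‖
        = ‖coef (F k) ρ n - coef G ρ n‖ * ‖z‖^n := by rw [norm_mul, norm_pow]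
      _ ≤ ‖coef (F k) ρ n - coef G ρ n‖ * R^n := by
          apply mul_le_mul_of_nonneg_left _ (norm_nonneg _)
          exact pow_le_pow_left₀ (norm_nonneg _) hz n
      _ ≤ (M + MG) * (1/2:ℝ)^n := hdiff_bd k n
  have hgeom : Summable (fun n : ℕ => (M + MG) * (1/2:ℝ)^n) :=
    (summable_geometric_of_lt_one (by norm_num) (by norm_num)).mul_left _
  have husum : Summable (fun n => ‖u n‖) :=
    Summable.of_nonneg_of_le (fun _ => norm_nonneg _) hub hgeom
  have split := husum.sum_add_tsum_nat_add N
  calc ‖F k z - G z‖ = ‖∑' n, u n‖ := by rw [hsub.tsum_eq]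
    _ ≤ ∑' n, ‖u n‖ := norm_tsum_le_tsum_norm husum
    _ = (∑ n ∈ range N, ‖u n‖) + ∑' n, ‖u (n + N)‖ := split.symm
    _ < ε/2 + ε/2 := by
        apply add_lt_add_of_lt_of_le
        · -- head
          have hhead : ∀ n ∈ range N, ‖u n‖ ≤ δ * R^n := by
            intro n hn
            rw [hu]
            calc ‖(coef (F k) ρ n - coef G ρ n) * z^n‖
                ≤ ‖coef (F k) ρ n - coef G ρ n‖ * R^n := by
                  rw [norm_mul, norm_pow]
                  apply mul_le_mul_of_nonneg_left _ (norm_nonneg _)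
                  exact pow_le_pow_left₀ (norm_nonneg _) hz n
              _ ≤ δ * R^n := by
                  apply mul_le_mul_of_nonneg_right (le_of_lt (hK0 k hk n hn)) (by positivity)
          calc (∑ n ∈ range N, ‖u n‖) ≤ ∑ n ∈ range N, δ * R^n := Finset.sum_le_sum hhead
            _ = δ * S := by rw [hS, Finset.mul_sum]
            _ < ε/2 := by
                rw [hδ, div_mul_eq_mul_div, div_lt_iff₀ (by positivity)]
                nlinarith
        · -- tail
          have htail : ∀ n : ℕ, ‖u (n + N)‖ ≤ ((M + MG) * (1/2:ℝ)^N) * (1/2:ℝ)^n := by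
            intro n
            calc ‖u (n + N)‖ ≤ (M + MG) * (1/2:ℝ)^(n+N) := hub (n + N)
              _ = ((M + MG) * (1/2:ℝ)^N) * (1/2:ℝ)^n := by rw [pow_add]; ring
          calc (∑' n, ‖u (n + N)‖) ≤ ∑' n : ℕ, ((M + MG) * (1/2:ℝ)^N) * (1/2:ℝ)^n := by
                apply (husum.comp_injective (add_left_injective N)).tsum_le_tsum htail
                exact (summable_geometric_of_lt_one (by norm_num) (by norm_num)).mul_left _
            _ = ((M + MG) * (1/2:ℝ)^N) * 2 := by
                rw [tsum_mul_left, tsum_geometric_of_lt_one (by norm_num) (by norm_num)]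
                norm_num
            _ ≤ ε/2 := by nlinarith
    _ = ε := by ring

/-- Montel's theorem plus the identity theorem: if entire functions `F_k` are uniformly
bounded on compacts and converge on the real line to `t ↦ -t²σ²/2`, then they converge
locally uniformly on ℂ to `z ↦ -z²σ²/2`; in particular `F_k(iξ) → ξ²σ²/2` for real `ξ`. -/
theorem montel_identity_clt
    (σ : ℝ) (hσ : 0 ≤ σ) (F : ℕ → ℂ → ℂ)
    (hent : ∀ k, Differentiable ℂ (F k))
    (hbd : ∀ K : Set ℂ, IsCompact K → ∃ C, ∀ k, ∀ z ∈ K, ‖F k z‖ ≤ C)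
    (hreal : ∀ t : ℝ, Tendsto (fun k => F k (t : ℂ)) atTop
      (nhds (-((t : ℂ) ^ 2) * (σ : ℂ) ^ 2 / 2))) :
    (∀ K : Set ℂ, IsCompact K →
      TendstoUniformlyOn (fun k z => F k z) (fun z => -(z ^ 2) * (σ : ℂ) ^ 2 / 2)
        atTop K) ∧
    (∀ ξ : ℝ, Tendsto (fun k => F k ((ξ : ℂ) * I)) atTop
      (nhds (((ξ ^ 2 * σ ^ 2 / 2 : ℝ) : ℂ)))) := by
  have part1 : ∀ K : Set ℂ, IsCompact K →
      TendstoUniformlyOn (fun k z => F k z) (fun z => -(z ^ 2) * (σ : ℂ) ^ 2 / 2)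
        atTop K := by
    intro K hK
    obtain ⟨R, hRK⟩ := hK.isBounded.subset_closedBall (0:ℂ)
    have hsub : K ⊆ closedBall (0:ℂ) (max R 1) :=
      hRK.trans (closedBall_subset_closedBall (le_max_left _ _))
    exact (unif_on_ball hent hbd hreal (lt_of_lt_of_le one_pos (le_max_right R 1))).mono hsub
  refine ⟨part1, fun ξ => ?_⟩
  have := (part1 {(ξ:ℂ) * I} isCompact_singleton)
  have h2 := (tendstoUniformlyOn_singleton_iff_tendsto).mp this
  have hval : -(((ξ:ℂ) * I) ^ 2) * (σ:ℂ) ^ 2 / 2 = ((ξ ^ 2 * σ ^ 2 / 2 : ℝ) : ℂ) := by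
    push_cast
    rw [mul_pow, I_sq]
    ring
  rw [hval] at h2
  exact h2
end

section
/- Suppose f_k : M → ℝ converges uniformly to f with sup_x |f_k(x) - f(x)| ≤ C/k, f is differentiable at a point x₀ (identified with 0 ∈ ℝ^n in a chart), and fix R > 0. Then sup_{|z| ≤ R} |√k (f_k(z/√k) - f_k(0)) - ∇f(0)·z| → 0 as k → ∞. -/
open Filter Metric

/-- Key rescaling estimate: if `f_k → f` uniformly at rate `C/k` and `f` is
differentiable at `0` with differential `L`, then
`sup_{|z|≤R} |√k (f_k(z/√k) - f_k(0)) - L z| → 0` as `k → ∞`. -/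
theorem rescaling_estimate
    {n : ℕ} (f : ℕ → EuclideanSpace ℝ (Fin n) → ℝ)
    (g : EuclideanSpace ℝ (Fin n) → ℝ)
    (C : ℝ)
    (hunif : ∀ k : ℕ, 0 < k → ∀ x, |f k x - g x| ≤ C / k)
    (L : EuclideanSpace ℝ (Fin n) →L[ℝ] ℝ)
    (hdiff : HasFDerivAt g L 0)
    (R : ℝ) (hR : 0 < R) :
    ∀ ε > 0, ∃ K : ℕ, ∀ k ≥ K, ∀ z : EuclideanSpace ℝ (Fin n), ‖z‖ ≤ R →
      |Real.sqrt k * (f k ((Real.sqrt k)⁻¹ • z) - f k 0) - L z| < ε := by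
  intro ε hε
  have hC : 0 ≤ C := by
    have h := hunif 1 one_pos 0
    have h2 := abs_nonneg (f 1 0 - g 0)
    simp at h
    linarith
  have hδ : 0 < ε / (3 * R) := by positivity
  have hlo := hdiff.isLittleO.def hδ
  rw [Metric.eventually_nhds_iff] at hlo
  obtain ⟨r, hr, hball⟩ := hlo
  set A : ℝ := max (6 * C / ε) (2 * R / r) with hA
  have hA0 : 0 ≤ A := le_trans (by positivity) (le_max_left _ _)
  refine ⟨max 1 (⌈A ^ 2⌉₊ + 1), fun k hk z hz => ?_⟩
  have hk1 : 1 ≤ k := le_trans (le_max_left _ _) hk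
  have hk0 : (0 : ℝ) < k := by exact_mod_cast hk1
  have hkA : A ^ 2 ≤ (k : ℝ) := by
    have h1 : ⌈A ^ 2⌉₊ ≤ k := le_trans (le_trans (Nat.le_succ _) (le_max_right _ _)) hk
    calc A ^ 2 ≤ (⌈A ^ 2⌉₊ : ℝ) := Nat.le_ceil _
      _ ≤ k := by exact_mod_cast h1
  set s := Real.sqrt k with hs
  have hs0 : 0 < s := Real.sqrt_pos.2 hk0
  have hs2 : s ^ 2 = (k : ℝ) := Real.sq_sqrt hk0.le
  have hsA : A ≤ s := by
    rw [hs, show A = Real.sqrt (A ^ 2) from (Real.sqrt_sq hA0).symm]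
    exact Real.sqrt_le_sqrt hkA
  set y : EuclideanSpace ℝ (Fin n) := s⁻¹ • z with hy
  have hyn : ‖y‖ ≤ R / s := by
    rw [hy, norm_smul, norm_inv, Real.norm_eq_abs, abs_of_pos hs0, div_eq_inv_mul]
    exact mul_le_mul_of_nonneg_left hz (by positivity)
  have hsr : 2 * R / r ≤ s := le_trans (le_max_right _ _) hsA
  have hyr : ‖y‖ < r := by
    have h1 : R / s ≤ r / 2 := by
      rw [div_le_iff₀ hs0]
      calc R = (2 * R / r) * (r / 2) := by field_simp
        _ ≤ s * (r / 2) := by exact mul_le_mul_of_nonneg_right hsr (by positivity)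
        _ = r / 2 * s := by ring
    linarith [hyn]
  have hb := hball (show dist y 0 < r by rwa [dist_zero_right])
  simp only [sub_zero] at hb
  -- hb : ‖g y - g 0 - L y‖ ≤ ε / (3 * R) * ‖y‖
  have hLz : s * L y = L z := by
    rw [hy, map_smul, smul_eq_mul]
    field_simp
  have key : s * (f k y - f k 0) - L z =
      (s * (f k y - g y)) - (s * (f k 0 - g 0)) + s * (g y - g 0 - L y) := by
    rw [← hLz]; ring
  have h1 := hunif k hk1 y
  have h2 := hunif k hk1 0
  have hCk : s * (C / k) = C / s := by
    rw [← hs2]; field_simp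
  have hCs : C / s ≤ ε / 6 := by
    rw [div_le_iff₀ hs0]
    have h6 : 6 * C / ε ≤ s := le_trans (le_max_left _ _) hsA
    have := (div_le_iff₀ hε).mp h6
    linarith
  have hterm3 : |s * (g y - g 0 - L y)| ≤ ε / 3 := by
    rw [abs_mul, abs_of_pos hs0]
    have : |g y - g 0 - L y| ≤ ε / (3 * R) * ‖y‖ := by
      simpa [Real.norm_eq_abs] using hb
    calc s * |g y - g 0 - L y| ≤ s * (ε / (3 * R) * (R / s)) := by
          apply mul_le_mul_of_nonneg_left _ hs0.le
          exact le_trans this (mul_le_mul_of_nonneg_left hyn hδ.le)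
      _ = ε / 3 := by field_simp
  have hterm1 : |s * (f k y - g y)| ≤ ε / 6 := by
    rw [abs_mul, abs_of_pos hs0]
    calc s * |f k y - g y| ≤ s * (C / k) := mul_le_mul_of_nonneg_left h1 hs0.le
      _ = C / s := hCk
      _ ≤ ε / 6 := hCs
  have hterm2 : |s * (f k 0 - g 0)| ≤ ε / 6 := by
    rw [abs_mul, abs_of_pos hs0]
    calc s * |f k 0 - g 0| ≤ s * (C / k) := mul_le_mul_of_nonneg_left h2 hs0.le
      _ = C / s := hCk
      _ ≤ ε / 6 := hCs
  calc |s * (f k y - f k 0) - L z|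
      = |(s * (f k y - g y)) - (s * (f k 0 - g 0)) + s * (g y - g 0 - L y)| := by rw [key]
    _ ≤ |(s * (f k y - g y)) - (s * (f k 0 - g 0))| + |s * (g y - g 0 - L y)| := abs_add_le _ _
    _ ≤ |s * (f k y - g y)| + |s * (f k 0 - g 0)| + |s * (g y - g 0 - L y)| := by
        linarith [abs_sub (s * (f k y - g y)) (s * (f k 0 - g 0))]
    _ ≤ ε / 6 + ε / 6 + ε / 3 := by linarith
    _ < ε := by linarith
end
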